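/- arXiv:1509.06884 — 2 statements merged into one kernel-verified Lean document; each statement's English description precedes it below -/
import Mathlib

section
/- For every n ≥ 3, the Z-cube H_n is Hamiltonian connected: any two distinct vertices are joined by a Hamiltonian path. -/
open SimpleGraph

/-- `κ(n)`: `0` for `n ≤ 1`, and `max{1, ⌈log₂ n − 2 log₂ log₂ n⌉}` for `n ≥ 2`. -/
noncomputable def kappa (n : ℕ) : ℕ :=
  if n ≤ 1 then 0
  else max 1 (Int.toNat ⌈Real.logb 2 (n : ℝ) - 2 * Real.logb 2 (Real.logb 2 (n : ℝ))⌉)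

/-- XOR the first `k` bits with the last `k` bits of a binary string of length `n`. -/
def phiAux (n k : ℕ) (x : Fin n → ZMod 2) : Fin n → ZMod 2 :=
  fun i => if h : i.val < k ∧ n - k + i.val < n then x i + x ⟨n - k + i.val, h.2⟩ else x i

/-- The permutation `φ` on `Z₂ⁿ`. -/
noncomputable def phi (n : ℕ) : (Fin n → ZMod 2) → (Fin n → ZMod 2) := phiAux n (kappa n)

/-- The Z-cube `H_n`, a graph on the binary strings of length `n`.  Bit `0` is the
"first" bit; `Fin.tail x` is the string `x` with its first bit removed. -/
noncomputable def Zcube : (n : ℕ) → SimpleGraph (Fin n → ZMod 2)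
  | 0 => ⊥
  | (n + 1) =>
    { Adj := fun x y =>
        (x 0 = y 0 ∧ (Zcube n).Adj (Fin.tail x) (Fin.tail y)) ∨
        (x 0 ≠ y 0 ∧ (Fin.tail y = phi n (Fin.tail x) ∨ Fin.tail x = phi n (Fin.tail y))),
      symm := by
        constructor
        rintro x y (⟨h1, h2⟩ | ⟨h1, h2⟩)
        · exact Or.inl ⟨h1.symm, (Zcube n).symm.symm _ _ h2⟩
        · exact Or.inr ⟨h1.symm, h2.symm⟩
      loopless := by
        constructor
        rintro x (⟨h1, h2⟩ | ⟨h1, h2⟩)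
        · exact (Zcube n).loopless.irrefl _ h2
        · exact h1 rfl }
/-- `σ_n = Σ_{j ∈ S(n)} j / κ(j)²`, where `S(n) = {j ≤ n : κ(j) = κ(j−1)+1}`. -/
noncomputable def sigmaZ (n : ℕ) : ℝ :=
  ∑ j ∈ (Finset.range (n + 1)).filter (fun j => kappa j = kappa (j - 1) + 1),
    (j : ℝ) / (kappa j : ℝ) ^ 2

/-- The last `k` bits of a binary string of length `n` (for `k ≤ n`). -/
def lastBits (k n : ℕ) (v : Fin n → ZMod 2) : Fin k → ZMod 2 :=
  fun i => if h : n - k + i.val < n then v ⟨n - k + i.val, h⟩ else 0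

/-- A walk in `H_n` is `k`-robust if every binary string of length `k` occurs as the
last `k` bits of some vertex of the walk. -/
def IsRobustWalk (k : ℕ) {n : ℕ} {x y : Fin n → ZMod 2} (W : (Zcube n).Walk x y) : Prop :=
  ∀ z : Fin k → ZMod 2, ∃ v ∈ W.support, lastBits k n v = z

/-- The permutation `φ_k` on `Z₂ⁿ`. -/
def phiK (k n : ℕ) (x : Fin n → ZMod 2) : Fin n → ZMod 2 :=
  if n ≤ k then x
  else if n ≤ 2 * k then
    fun i => if h : i.val < n - k ∧ k + i.val < n then x i + x ⟨k + i.val, h.2⟩ else x i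
  else
    fun i => if h : i.val < k ∧ n - k + i.val < n then x i + x ⟨n - k + i.val, h.2⟩ else x i

/-- The Z-cube `Z_{n,k}`. -/
def ZcubeK (k : ℕ) : (n : ℕ) → SimpleGraph (Fin n → ZMod 2)
  | 0 => ⊥
  | (n + 1) =>
    { Adj := fun x y =>
        (x 0 = y 0 ∧ (ZcubeK k n).Adj (Fin.tail x) (Fin.tail y)) ∨
        (x 0 ≠ y 0 ∧ (Fin.tail y = phiK k n (Fin.tail x) ∨ Fin.tail x = phiK k n (Fin.tail y))),
      symm := by
        constructor
        rintro x y (⟨h1, h2⟩ | ⟨h1, h2⟩)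
        · exact Or.inl ⟨h1.symm, (ZcubeK k n).symm.symm _ _ h2⟩
        · exact Or.inr ⟨h1.symm, h2.symm⟩
      loopless := by
        constructor
        rintro x (⟨h1, h2⟩ | ⟨h1, h2⟩)
        · exact (ZcubeK k n).loopless.irrefl _ h2
        · exact h1 rfl }

/-- The subgraph of `H_n` consisting of the cross edges, i.e. the edges between the
two copies `0H_{n−1}` and `1H_{n−1}` (edges whose endpoints differ in the first bit). -/
noncomputable def crossSubgraph (n : ℕ) : (Zcube n).Subgraph where
  verts := Set.univ
  Adj x y := ∃ h : 0 < n, (Zcube n).Adj x y ∧ x ⟨0, h⟩ ≠ y ⟨0, h⟩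
  adj_sub := by rintro x y ⟨h, h1, h2⟩; exact h1
  edge_vert := by intro x y _; trivial
  symm := by constructor; rintro x y ⟨h, h1, h2⟩; exact ⟨h, h1.symm, h2.symm⟩

/-- A graph is Hamiltonian connected if any two distinct vertices are joined by a
Hamiltonian path. -/
def HamiltonianConnected {V : Type*} [DecidableEq V] (G : SimpleGraph V) : Prop :=
  ∀ x y : V, x ≠ y → ∃ p : G.Walk x y, p.IsHamiltonian

/-- The graph obtained from two disjoint copies of `G` by adding the perfect matching
`(u, false) ∼ (ψ u, true)` given by a bijection `ψ`. -/
def matchingJoin {V : Type*} (G : SimpleGraph V) (ψ : V ≃ V) : SimpleGraph (V × Bool) where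
  Adj a b := (a.2 = b.2 ∧ G.Adj a.1 b.1) ∨
    (a.2 = false ∧ b.2 = true ∧ b.1 = ψ a.1) ∨
    (a.2 = true ∧ b.2 = false ∧ a.1 = ψ b.1)
  symm := by
    constructor
    rintro ⟨u, i⟩ ⟨v, j⟩ (⟨h1, h2⟩ | ⟨h1, h2, h3⟩ | ⟨h1, h2, h3⟩)
    · exact Or.inl ⟨h1.symm, h2.symm⟩
    · exact Or.inr (Or.inr ⟨h2, h1, h3⟩)
    · exact Or.inr (Or.inl ⟨h2, h1, h3⟩)
  loopless := by
    constructor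
    rintro ⟨u, i⟩ (⟨h1, h2⟩ | ⟨h1, h2, h3⟩ | ⟨h1, h2, h3⟩)
    · exact G.loopless.irrefl _ h2
    · simp_all
    · simp_all

/-!
`H_{n+1}` contains, as a spanning subgraph, two copies of `H_n` joined by the perfect matching
`u ↦ φ(u)`; `φ` is a bijection because it only adds to some coordinates a coordinate of larger
index. If `G` is Hamiltonian connected and has at least three vertices, any such join of two
copies of `G` is Hamiltonian connected. For endpoints in different copies, choose `u` avoiding two
vertices and concatenate a Hamiltonian path ending at `u` in the first copy with one starting at
the partner of `u` in the second. For endpoints in the same copy, take a Hamiltonian path of `G`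
and replace its first edge by a detour through the whole other copy. The induction starts at
`H_3`, which is checked by listing Hamiltonian paths.
-/

open Function

section

variable {V : Type*} [DecidableEq V] {G : SimpleGraph V}

theorem HamiltonianConnected.of_hom_bijective {W : Type*} [DecidableEq W] {H : SimpleGraph W}
    (f : G →g H) (hf : Bijective f) (hG : HamiltonianConnected G) : HamiltonianConnected H := by
  intro x y hxy
  obtain ⟨x, rfl⟩ := hf.surjective x
  obtain ⟨y, rfl⟩ := hf.surjective y
  obtain ⟨p, hp⟩ := hG x y (ne_of_apply_ne f hxy)
  exact ⟨p.map f, hp.map f hf⟩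

lemma SimpleGraph.exists_isHamiltonian_of_isChain [Fintype V] {l : List V}
    (hc : l.IsChain G.Adj) (hnd : l.Nodup) (hlen : l.length = Fintype.card V) {x y : V}
    (hx : l.head? = some x) (hy : l.getLast? = some y) :
    ∃ p : G.Walk x y, p.IsHamiltonian := by
  have hne : l ≠ [] := by rintro rfl; simp at hx
  obtain rfl : l.head hne = x := by simpa [List.head?_eq_some_head hne] using hx
  obtain rfl : l.getLast hne = y := by simpa [List.getLast?_eq_some_getLast hne] using hy
  refine ⟨Walk.ofSupport l hne hc, Walk.isHamiltonian_iff_isPath_and_length_eq.mpr ⟨?_, ?_⟩⟩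
  · simpa [Walk.isPath_def] using hnd
  · simp [hlen]

end

namespace matchingJoin

variable {V : Type*} (G : SimpleGraph V) (ψ : V ≃ V)

def partner : Bool → V ≃ V
  | false => ψ
  | true => ψ.symm

@[simps]
def layerHom (b : Bool) : G →g matchingJoin G ψ where
  toFun u := (u, b)
  map_rel' h := Or.inl ⟨rfl, h⟩

lemma adj_partner (b : Bool) (u : V) :
    (matchingJoin G ψ).Adj (layerHom G ψ b u) (layerHom G ψ (!b) (partner ψ b u)) := by
  cases b
  · exact Or.inr (Or.inl ⟨rfl, rfl, rfl⟩)
  · exact Or.inr (Or.inr ⟨rfl, rfl, (ψ.apply_symm_apply u).symm⟩)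

variable {G ψ} [DecidableEq V]

lemma isHamiltonian_of_perm {x y : V × Bool} {a a' c c' : V}
    {w : (matchingJoin G ψ).Walk x y} {p : G.Walk a a'} {q : G.Walk c c'} (b : Bool)
    (hp : p.IsHamiltonian) (hq : q.IsHamiltonian)
    (hw : w.support.Perm (p.support.map (layerHom G ψ b) ++ q.support.map (layerHom G ψ !b))) :
    w.IsHamiltonian := by
  refine (Walk.isPath_def _ |>.mpr ?_).isHamiltonian_of_mem fun ⟨v, c⟩ => ?_
  · refine hw.nodup_iff.mpr <| (hp.isPath.support_nodup.map (Prod.mk_left_injective b)).append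
      (hq.isPath.support_nodup.map (Prod.mk_left_injective !b)) ?_
    simp [List.disjoint_left]
  · rw [hw.mem_iff]
    cases b <;> cases c <;> simp [hp.mem_support, hq.mem_support]

lemma exists_isHamiltonian_same_layer (hG : HamiltonianConnected G) {a c : V} (hac : a ≠ c)
    (b : Bool) :
    ∃ w : (matchingJoin G ψ).Walk (layerHom G ψ b a) (layerHom G ψ b c), w.IsHamiltonian := by
  obtain ⟨p, hp⟩ := hG a c hac
  obtain ⟨u, hau, q, rfl⟩ := p.exists_eq_cons_of_ne hac
  obtain ⟨r, hr⟩ := hG (partner ψ b a) (partner ψ b u) ((partner ψ b).injective.ne hau.ne)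
  -- cross to the other layer, traverse it, and come back to finish the path `a, u, …, c`
  refine ⟨.cons (adj_partner G ψ b a) ((r.map (layerHom G ψ !b)).append
    (.cons (adj_partner G ψ b u).symm (q.map (layerHom G ψ b)))),
    isHamiltonian_of_perm b hp hr ?_⟩
  simpa [Walk.support_append] using List.perm_append_comm

lemma exists_isHamiltonian_other_layer (hG : HamiltonianConnected G) (hV : 3 ≤ ENat.card V)
    (a c : V) (b : Bool) :
    ∃ w : (matchingJoin G ψ).Walk (layerHom G ψ b a) (layerHom G ψ (!b) c),
      w.IsHamiltonian := by
  obtain ⟨u, hua, huc⟩ := ENat.exists_ne_ne_of_three_le hV a ((partner ψ b).symm c)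
  obtain ⟨p, hp⟩ := hG a u hua.symm
  obtain ⟨r, hr⟩ := hG (partner ψ b u) c (by rwa [Ne, ← Equiv.eq_symm_apply])
  refine ⟨(p.map (layerHom G ψ b)).append
    (.cons (adj_partner G ψ b u) (r.map (layerHom G ψ !b))), isHamiltonian_of_perm b hp hr ?_⟩
  simp [Walk.support_append]

end matchingJoin

theorem HamiltonianConnected.matchingJoin {V : Type*} [DecidableEq V] {G : SimpleGraph V}
    (hG : HamiltonianConnected G) (hV : 3 ≤ ENat.card V) (ψ : V ≃ V) :
    HamiltonianConnected (matchingJoin G ψ) := by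
  rintro ⟨a, b⟩ ⟨c, b'⟩ hne
  obtain rfl | rfl : b = b' ∨ b' = !b := by cases b <;> cases b' <;> simp
  · exact matchingJoin.exists_isHamiltonian_same_layer hG (by rintro rfl; exact hne rfl) b
  · exact matchingJoin.exists_isHamiltonian_other_layer hG hV a c b

lemma zcube_succ_adj (n : ℕ) (x y : Fin (n + 1) → ZMod 2) :
    (Zcube (n + 1)).Adj x y ↔
      (x 0 = y 0 ∧ (Zcube n).Adj (Fin.tail x) (Fin.tail y)) ∨
      (x 0 ≠ y 0 ∧ (Fin.tail y = phi n (Fin.tail x) ∨ Fin.tail x = phi n (Fin.tail y))) :=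
  Iff.rfl

lemma kappa_eq_zero {n : ℕ} (hn : n ≤ 1) : kappa n = 0 := if_pos hn

lemma kappa_two : kappa 2 = 1 := by
  simp [kappa]

lemma kappa_lt_self {n : ℕ} (hn : 0 < n) : kappa n < n := by
  unfold kappa
  split_ifs with h
  · exact hn
  set L := Real.logb 2 n
  have hL : 1 ≤ L := by
    rw [Real.le_logb_iff_rpow_le one_lt_two (by positivity), Real.rpow_one]
    exact_mod_cast (by omega : 2 ≤ n)
  have hLn : L ≤ ((n - 1 : ℕ) : ℝ) := by
    rw [Real.logb_le_iff_le_rpow one_lt_two (by positivity), Real.rpow_natCast]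
    have := Nat.lt_two_pow_self (n := n - 1)
    exact_mod_cast (by omega : n ≤ 2 ^ (n - 1))
  have hceil : ⌈L - 2 * Real.logb 2 L⌉ ≤ ((n - 1 : ℕ) : ℤ) :=
    Int.ceil_le.mpr (by push_cast at hLn ⊢; linarith [Real.logb_nonneg one_lt_two hL])
  omega

lemma phiAux_injective {n k : ℕ} (hk : k < n) : Injective (phiAux n k) := by
  intro x y hxy
  -- coordinate `i` of `phiAux n k x` only involves `x i` and a coordinate of larger index
  suffices ∀ m (i : Fin n), n - i ≤ m → x i = y i from funext fun i => this n i (by omega)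
  intro m
  induction m with
  | zero => intro i hi; omega
  | succ m ih =>
    intro i hi
    have hi' := congrFun hxy i
    unfold phiAux at hi'
    split_ifs at hi' with h
    · rw [ih ⟨n - k + i, h.2⟩ (by simp only; omega)] at hi'
      exact add_right_cancel hi'
    · exact hi'

lemma phi_injective (n : ℕ) : Injective (phi n) := by
  rcases Nat.eq_zero_or_pos n with rfl | hn
  · exact injective_of_subsingleton _
  · exact phiAux_injective (kappa_lt_self hn)

noncomputable def phiEquiv (n : ℕ) : (Fin n → ZMod 2) ≃ (Fin n → ZMod 2) :=
  Equiv.ofBijective (phi n) (Finite.injective_iff_bijective.mp (phi_injective n))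

def zcubeSuccEquiv (n : ℕ) : (Fin n → ZMod 2) × Bool ≃ (Fin (n + 1) → ZMod 2) :=
  (Equiv.prodComm _ _).trans
    ((finTwoEquiv.symm.prodCongr (Equiv.refl _)).trans (Fin.consEquiv fun _ => ZMod 2))

noncomputable def zcubeSuccHom (n : ℕ) :
    matchingJoin (Zcube n) (phiEquiv n) →g Zcube (n + 1) where
  toFun := zcubeSuccEquiv n
  map_rel' := by
    rintro ⟨u, b⟩ ⟨v, c⟩ (⟨rfl, h⟩ | ⟨rfl, rfl, rfl⟩ | ⟨rfl, rfl, rfl⟩)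
    · exact Or.inl ⟨rfl, h⟩
    · exact Or.inr ⟨(by decide : (0 : Fin 2) ≠ 1), Or.inl rfl⟩
    · exact Or.inr ⟨(by decide : (1 : Fin 2) ≠ 0), Or.inr rfl⟩

theorem HamiltonianConnected.zcube_succ {n : ℕ} (hn : 2 ≤ n)
    (h : HamiltonianConnected (Zcube n)) : HamiltonianConnected (Zcube (n + 1)) := by
  have hcard : 3 ≤ ENat.card (Fin n → ZMod 2) := by
    rw [ENat.card_eq_coe_fintype_card, Fintype.card_fun, ZMod.card, Fintype.card_fin]
    exact_mod_cast (by norm_num : 3 ≤ 2 ^ 2).trans (Nat.pow_le_pow_right two_pos hn)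
  exact (h.matchingJoin hcard (phiEquiv n)).of_hom_bijective (zcubeSuccHom n)
    (zcubeSuccEquiv n).bijective

lemma zcube_three_adj_iff (x y : Fin 3 → ZMod 2) :
    (Zcube 3).Adj x y ↔
      x 0 = y 0 ∧ (x 1 = y 1 ∧ x 2 ≠ y 2 ∨ x 1 ≠ y 1 ∧ x 2 = y 2) ∨
      x 0 ≠ y 0 ∧ y 1 = x 1 + x 2 ∧ y 2 = x 2 := by
  simp only [zcube_succ_adj, phi, kappa_two, kappa_eq_zero zero_le_one, kappa_eq_zero le_rfl,
    show Zcube 0 = ⊥ from rfl, bot_adj]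
  revert x y
  decide

def zcubeThreePaths : List (List (Fin 3 → ZMod 2)) :=
  let paths : List (List ℕ) :=
    [[0, 2, 3, 5, 4, 6, 7, 1], [0, 1, 7, 6, 4, 5, 3, 2], [0, 1, 7, 5, 4, 6, 2, 3],
     [0, 1, 3, 2, 6, 7, 5, 4], [0, 2, 3, 1, 7, 6, 4, 5], [0, 2, 3, 1, 7, 5, 4, 6],
     [0, 1, 3, 2, 6, 4, 5, 7], [1, 0, 4, 6, 7, 5, 3, 2], [1, 0, 4, 5, 7, 6, 2, 3],
     [1, 0, 2, 3, 5, 7, 6, 4], [1, 3, 2, 0, 4, 6, 7, 5], [1, 3, 2, 0, 4, 5, 7, 6],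
     [1, 0, 2, 3, 5, 4, 6, 7], [2, 0, 1, 7, 6, 4, 5, 3], [2, 0, 1, 3, 5, 7, 6, 4],
     [2, 0, 4, 6, 7, 1, 3, 5], [2, 0, 4, 5, 3, 1, 7, 6], [2, 0, 1, 3, 5, 4, 6, 7],
     [3, 1, 0, 2, 6, 7, 5, 4], [3, 1, 7, 6, 2, 0, 4, 5], [3, 1, 7, 5, 4, 0, 2, 6],
     [3, 1, 0, 2, 6, 4, 5, 7], [4, 0, 1, 3, 2, 6, 7, 5], [4, 0, 1, 7, 5, 3, 2, 6],
     [4, 5, 3, 1, 0, 2, 6, 7], [5, 4, 0, 2, 3, 1, 7, 6], [5, 3, 2, 6, 4, 0, 1, 7],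
     [6, 2, 0, 4, 5, 3, 1, 7]]
  let bits (k : ℕ) : Fin 3 → ZMod 2 := ![(k / 4 : ℕ), (k / 2 : ℕ), (k : ℕ)]
  (paths ++ paths.map List.reverse).map (List.map bits)

theorem hamiltonianConnected_zcube_three : HamiltonianConnected (Zcube 3) := by
  let _ : DecidableRel (Zcube 3).Adj := fun x y =>
    decidable_of_iff _ (zcube_three_adj_iff x y).symm
  have hpaths :
      ∀ l ∈ zcubeThreePaths, l.IsChain (Zcube 3).Adj ∧ l.Nodup ∧ l.length = 8 := by
    decide
  have hends : ∀ x y : Fin 3 → ZMod 2, x ≠ y →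
      ∃ l ∈ zcubeThreePaths, l.head? = some x ∧ l.getLast? = some y := by
    decide
  intro x y hxy
  obtain ⟨l, hl, hx, hy⟩ := hends x y hxy
  obtain ⟨hc, hnd, hlen⟩ := hpaths l hl
  exact exists_isHamiltonian_of_isChain hc hnd (by simpa using hlen) hx hy

/-- for every `n ≥ 3`, the Z-cube `H_n` is Hamiltonian connected. -/
theorem zcube_hamiltonianConnected (n : ℕ) (hn : 3 ≤ n) :
    HamiltonianConnected (Zcube n) := by
  induction n, hn using Nat.le_induction with
  | base => exact hamiltonianConnected_zcube_three
  | succ m hm ih => exact ih.zcube_succ (by omega)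
end

section
/- σ_n = O(n/(log₂ n)²); in particular σ_n = o(n/log₂ n) as n → ∞. -/
open SimpleGraph

/-!
With `t = log₂ n` and `κ*(n) = t - 2 log₂ t` one has `2 ^ κ*(n) = n / t²`, and for large `n`
`κ(n) = ⌈κ*(n)⌉` with `κ*(n) ≥ t / 2`. Hence a term `j / κ(j)²` of `σ_n` is at most
`2 ^ κ(j) · (log₂ j)² / κ(j)² ≤ 4 · 2 ^ κ(j)`. Since `κ` is eventually monotone, distinct jump
points carry distinct values of `κ`, all at most `κ(n)`, so the tail of `σ_n` is dominated by
`4 ∑_{i ≤ κ(n)} 2 ^ i ≤ 8 · 2 ^ κ(n) ≤ 16 n / (log₂ n)²`.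
-/

open Real Finset Filter Asymptotics

noncomputable def kappaReal (x : ℝ) : ℝ := logb 2 x - 2 * logb 2 (logb 2 x)

lemma kappa_eq_max_ceil {n : ℕ} (hn : 2 ≤ n) : kappa n = max 1 ⌈kappaReal n⌉.toNat := by
  rw [kappa, if_neg (by omega)]
  rfl

lemma two_rpow_kappaReal {x : ℝ} (hx : 1 < x) : (2 : ℝ) ^ kappaReal x = x / logb 2 x ^ 2 := by
  have ht : 0 < logb 2 x := logb_pos one_lt_two hx
  rw [kappaReal, rpow_sub two_pos, rpow_logb two_pos (by norm_num) (by linarith),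
    mul_comm 2, rpow_mul two_pos.le, rpow_logb two_pos (by norm_num) ht, rpow_two]

lemma logb_two_le_div_four {t : ℝ} (ht : 16 ≤ t) : logb 2 t ≤ t / 4 := by
  have hlog : log (t / 16) ≤ t / 16 - 1 := log_le_sub_one_of_pos (by positivity)
  have hsplit : log (t / 16) = log t - 4 * log 2 := by
    rw [log_div (by positivity) (by norm_num), show (16 : ℝ) = 2 ^ 4 by norm_num, log_pow]
    push_cast
    ring
  have hlog2 : 1 / 4 < log 2 := by linarith [log_two_gt_d9]
  rw [logb, div_le_iff₀ (log_pos one_lt_two)]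
  nlinarith

lemma monotoneOn_sub_two_mul_logb_two :
    MonotoneOn (fun t : ℝ => t - 2 * logb 2 t) (Set.Ici 3) := by
  intro s (hs : 3 ≤ s) t _ hst
  have hs0 : 0 < s := by linarith
  have ht0 : 0 < t := hs0.trans_le hst
  have hlog : s * (log t - log s) ≤ t - s := by
    rw [← log_div ht0.ne' hs0.ne']
    calc s * log (t / s) ≤ s * (t / s - 1) := by
          gcongr
          exact log_le_sub_one_of_pos (by positivity)
      _ = t - s := by field_simp
  have hs2 : 2 ≤ s * log 2 := by nlinarith [log_two_gt_d9]
  have key : 2 * (log t - log s) / log 2 ≤ t - s := by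
    rw [div_le_iff₀ (log_pos one_lt_two)]
    nlinarith
  simp only [logb]
  linarith [show 2 * (log t - log s) / log 2 = 2 * (log t / log 2) - 2 * (log s / log 2) by ring]

lemma le_logb_two_of_two_pow_le {a : ℕ} {x : ℝ} (hx : (2 : ℝ) ^ a ≤ x) : (a : ℝ) ≤ logb 2 x := by
  rw [le_logb_iff_rpow_le one_lt_two (lt_of_lt_of_le (by positivity) hx), rpow_natCast]
  exact hx

lemma kappaReal_monotoneOn : MonotoneOn kappaReal (Set.Ici 8) := by
  intro x (hx : 8 ≤ x) y (hy : 8 ≤ y) hxy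
  have h3 : ∀ {z : ℝ}, 8 ≤ z → 3 ≤ logb 2 z := fun hz => by
    exact_mod_cast le_logb_two_of_two_pow_le (a := 3) (by norm_num; linarith)
  exact monotoneOn_sub_two_mul_logb_two (h3 hx) (h3 hy)
    (logb_le_logb_of_le one_lt_two (by linarith) hxy)

lemma half_logb_two_le_kappaReal {x : ℝ} (hx : (2 : ℝ) ^ 16 ≤ x) :
    logb 2 x / 2 ≤ kappaReal x := by
  have h16 : (16 : ℝ) ≤ logb 2 x := by exact_mod_cast le_logb_two_of_two_pow_le hx
  have := logb_two_le_div_four h16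
  rw [kappaReal]
  linarith

lemma eight_le_kappaReal {x : ℝ} (hx : (2 : ℝ) ^ 16 ≤ x) : 8 ≤ kappaReal x := by
  have h16 : (16 : ℝ) ≤ logb 2 x := by exact_mod_cast le_logb_two_of_two_pow_le hx
  linarith [half_logb_two_le_kappaReal hx]

lemma kappa_eq_ceil_kappaReal {n : ℕ} (hn : 2 ^ 16 ≤ n) : (kappa n : ℤ) = ⌈kappaReal n⌉ := by
  have h8 : (8 : ℤ) ≤ ⌈kappaReal n⌉ :=
    Int.le_ceil_iff.mpr <| by
      push_cast
      linarith [eight_le_kappaReal (x := n) (by exact_mod_cast hn)]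
  rw [kappa_eq_max_ceil (by omega)]
  omega

lemma kappaReal_le_kappa {n : ℕ} (hn : 2 ^ 16 ≤ n) : kappaReal n ≤ kappa n := by
  have h := Int.le_ceil (kappaReal n)
  rwa [← kappa_eq_ceil_kappaReal hn, Int.cast_natCast] at h

lemma kappa_lt_kappaReal_add_one {n : ℕ} (hn : 2 ^ 16 ≤ n) :
    (kappa n : ℝ) < kappaReal n + 1 := by
  have h := Int.ceil_lt_add_one (kappaReal n)
  rwa [← kappa_eq_ceil_kappaReal hn, Int.cast_natCast] at h

lemma kappa_monotoneOn : MonotoneOn kappa (Set.Ici 8) := by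
  intro m (hm : 8 ≤ m) n (hn : 8 ≤ n) hmn
  rw [kappa_eq_max_ceil (by omega), kappa_eq_max_ceil (by omega)]
  have hm' : (8 : ℝ) ≤ m := by exact_mod_cast hm
  have hmn' : (m : ℝ) ≤ n := by exact_mod_cast hmn
  exact max_le_max le_rfl <| Int.toNat_le_toNat <| Int.ceil_mono <|
    kappaReal_monotoneOn hm' (hm'.trans hmn') hmn'

lemma div_kappa_sq_le {j : ℕ} (hj : 2 ^ 16 ≤ j) : (j : ℝ) / kappa j ^ 2 ≤ 4 * 2 ^ kappa j := by
  have hj' : (2 : ℝ) ^ 16 ≤ j := by exact_mod_cast hj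
  have ht : 0 < logb 2 (j : ℝ) := logb_pos one_lt_two (by linarith)
  have hk : 0 < (kappa j : ℝ) := by linarith [eight_le_kappaReal hj', kappaReal_le_kappa hj]
  have htk : logb 2 (j : ℝ) ≤ 2 * kappa j := by
    linarith [half_logb_two_le_kappaReal hj', kappaReal_le_kappa hj]
  have hpow : (2 : ℝ) ^ kappaReal j ≤ 2 ^ kappa j := by
    rw [← rpow_natCast]
    exact rpow_le_rpow_of_exponent_le one_le_two (kappaReal_le_kappa hj)
  rw [div_le_iff₀ (by positivity)]
  calc (j : ℝ) = 2 ^ kappaReal j * logb 2 (j : ℝ) ^ 2 := by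
        rw [two_rpow_kappaReal (by linarith), div_mul_cancel₀ _ (by positivity)]
    _ ≤ 2 ^ kappa j * (2 * kappa j) ^ 2 := by gcongr
    _ = 4 * 2 ^ kappa j * kappa j ^ 2 := by ring

lemma two_pow_kappa_le {n : ℕ} (hn : 2 ^ 16 ≤ n) :
    (2 : ℝ) ^ kappa n ≤ 2 * ((n : ℝ) / logb 2 n ^ 2) := by
  have hn' : (2 : ℝ) ^ 16 ≤ n := by exact_mod_cast hn
  rw [← two_rpow_kappaReal (by linarith)]
  calc (2 : ℝ) ^ kappa n = 2 ^ (kappa n : ℝ) := (rpow_natCast 2 _).symm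
    _ ≤ 2 ^ (kappaReal n + 1) :=
        rpow_le_rpow_of_exponent_le one_le_two (kappa_lt_kappaReal_add_one hn).le
    _ = 2 * 2 ^ kappaReal n := by rw [rpow_add_one two_ne_zero, mul_comm]

lemma one_le_div_logb_two_sq {n : ℕ} (hn : 2 ^ 16 ≤ n) : 1 ≤ (n : ℝ) / logb 2 n ^ 2 := by
  have hn' : (2 : ℝ) ^ 16 ≤ n := by exact_mod_cast hn
  rw [← two_rpow_kappaReal (by linarith)]
  exact one_le_rpow one_le_two (by linarith [eight_le_kappaReal hn'])

theorem sum_filter_jump_le_sum_range {f : ℕ → ℕ} {m : ℕ} (hf : MonotoneOn f (Set.Ioi m))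
    {g : ℕ → ℝ} (hg : ∀ i, 0 ≤ g i) (n : ℕ) :
    ∑ j ∈ (Ioc m n).filter (fun j => f j = f (j - 1) + 1), g (f j) ≤
      ∑ i ∈ range (f n + 1), g i := by
  set J := (Ioc m n).filter (fun j => f j = f (j - 1) + 1)
  have hmem : ∀ j ∈ J, m < j ∧ j ≤ n ∧ f j = f (j - 1) + 1 := by
    intro j hj
    simp only [J, mem_filter, mem_Ioc] at hj
    exact ⟨hj.1.1, hj.1.2, hj.2⟩
  have hstrict : ∀ a ∈ J, ∀ b ∈ J, a < b → f a < f b := by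
    intro a ha b hb hab
    obtain ⟨hma, -, -⟩ := hmem a ha
    obtain ⟨-, -, hjump⟩ := hmem b hb
    have := hf hma (show m < b - 1 by omega) (show a ≤ b - 1 by omega)
    omega
  rw [← sum_image]
  · refine sum_le_sum_of_subset_of_nonneg ?_ fun i _ _ => hg i
    intro i hi
    obtain ⟨j, hj, rfl⟩ := mem_image.mp hi
    obtain ⟨hmj, hjn, -⟩ := hmem j hj
    exact mem_range.mpr (Nat.lt_succ_of_le (hf hmj (show m < n by omega) hjn))
  · intro a ha b hb hab
    by_contra hne
    rcases Nat.lt_or_gt_of_ne hne with h | h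
    · exact (hstrict a ha b hb h).ne hab
    · exact (hstrict b hb a ha h).ne hab.symm

lemma geom_sum_two_le (k : ℕ) : ∑ i ∈ range (k + 1), (2 : ℝ) ^ i ≤ 2 * 2 ^ k := by
  rw [geom_sum_eq (by norm_num), pow_succ]
  norm_num
  linarith

lemma sigmaZ_eq_add_sum_Ioc {m n : ℕ} (hmn : m ≤ n) :
    sigmaZ n = sigmaZ m + ∑ j ∈ (Ioc m n).filter (fun j => kappa j = kappa (j - 1) + 1),
      (j : ℝ) / (kappa j : ℝ) ^ 2 := by
  simp only [sigmaZ, sum_filter, range_eq_Ico]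
  rw [← sum_Ico_consecutive _ (Nat.zero_le (m + 1)) (by omega : m + 1 ≤ n + 1),
    Ico_add_one_add_one_eq_Ioc]

lemma sigmaZ_nonneg (n : ℕ) : 0 ≤ sigmaZ n :=
  sum_nonneg fun _ _ => by positivity

lemma sigmaZ_le {n : ℕ} (hn : 2 ^ 16 ≤ n) :
    sigmaZ n ≤ sigmaZ (2 ^ 16) + 16 * ((n : ℝ) / logb 2 n ^ 2) := by
  rw [sigmaZ_eq_add_sum_Ioc hn]
  gcongr
  have hmono : MonotoneOn kappa (Set.Ioi (2 ^ 16)) :=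
    kappa_monotoneOn.mono fun x (hx : 2 ^ 16 < x) => show 8 ≤ x by omega
  calc _ ≤ ∑ j ∈ (Ioc (2 ^ 16) n).filter (fun j => kappa j = kappa (j - 1) + 1),
          4 * (2 : ℝ) ^ kappa j :=
        sum_le_sum fun j hj => div_kappa_sq_le (mem_Ioc.mp (mem_filter.mp hj).1).1.le
    _ ≤ ∑ i ∈ range (kappa n + 1), 4 * (2 : ℝ) ^ i :=
        sum_filter_jump_le_sum_range (g := fun i => 4 * (2 : ℝ) ^ i) hmono
          (fun i => by positivity) n
    _ = 4 * ∑ i ∈ range (kappa n + 1), (2 : ℝ) ^ i := by rw [mul_sum]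
    _ ≤ 16 * ((n : ℝ) / logb 2 n ^ 2) := by
        linarith [geom_sum_two_le (kappa n), two_pow_kappa_le hn]

lemma isLittleO_div_sq_div {α : Type*} {l : Filter α} (u : α → ℝ) {v : α → ℝ}
    (hv : Tendsto v l atTop) : (fun x => u x / v x ^ 2) =o[l] fun x => u x / v x := by
  have hinv : (fun x => (v x)⁻¹) =o[l] fun _ => (1 : ℝ) :=
    (isLittleO_one_iff ℝ).mpr (tendsto_inv_atTop_zero.comp hv)
  exact ((isBigO_refl (fun x => u x / v x) l).mul_isLittleO hinv).congr
    (fun x => by ring) (fun x => by ring)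

open Asymptotics in
/-- `σ_n = O(n/(log₂ n)²)`; in particular `σ_n = o(n/log₂ n)`. -/
theorem sigmaZ_asymptotics :
    (fun n : ℕ => sigmaZ n) =O[Filter.atTop] (fun n : ℕ => (n : ℝ) / (Real.logb 2 n) ^ 2) ∧
    (fun n : ℕ => sigmaZ n) =o[Filter.atTop] (fun n : ℕ => (n : ℝ) / Real.logb 2 n) := by
  have hO : (fun n : ℕ => sigmaZ n) =O[atTop] (fun n : ℕ => (n : ℝ) / logb 2 n ^ 2) := by
    refine IsBigO.of_bound (sigmaZ (2 ^ 16) + 16) ?_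
    filter_upwards [eventually_ge_atTop (2 ^ 16)] with n hn
    have hr := one_le_div_logb_two_sq hn
    rw [norm_of_nonneg (sigmaZ_nonneg n), norm_of_nonneg (by linarith)]
    nlinarith [sigmaZ_le hn, mul_nonneg (sigmaZ_nonneg (2 ^ 16)) (sub_nonneg.2 hr)]
  exact ⟨hO, hO.trans_isLittleO <| isLittleO_div_sq_div _ <|
    (tendsto_logb_atTop one_lt_two).comp tendsto_natCast_atTop_atTop⟩
end
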